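/- arXiv:2012.11443 — 8 statements merged into one kernel-verified Lean document; each statement's English description precedes it below -/
import Mathlib

section
/- Up to isomorphism there are exactly four commutative associative unital ℂ-algebras of dimension 3: Q¹ = ℂ[x₁,x₂]/(x₁²,x₁x₂,x₂²), Q² = ℂ[x]/(x³), Q³ = ℂ × ℂ[x]/(x²), and Q⁴ = ℂ × ℂ × ℂ. -/
open Polynomial MvPolynomial in
/-- `Q¹ = ℂ[x₁,x₂]/(x₁²,x₁x₂,x₂²)`. -/
noncomputable def Qone : Type :=
  MvPolynomial (Fin 2) ℂ ⧸ Ideal.span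
    {(X 0 : MvPolynomial (Fin 2) ℂ) ^ 2, X 0 * X 1, (X 1 : MvPolynomial (Fin 2) ℂ) ^ 2}

noncomputable instance : CommRing Qone := Ideal.Quotient.commRing _
noncomputable instance : Algebra ℂ Qone := Ideal.Quotient.algebra ℂ

open Polynomial in
/-- `Q² = ℂ[x]/(x³)`. -/
noncomputable def Qtwo : Type := Polynomial ℂ ⧸ Ideal.span {(X : Polynomial ℂ) ^ 3}

noncomputable instance : CommRing Qtwo := Ideal.Quotient.commRing _
noncomputable instance : Algebra ℂ Qtwo := Ideal.Quotient.algebra ℂ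

open Polynomial in
/-- `ℂ[x]/(x²)`. -/
noncomputable def Pone : Type := Polynomial ℂ ⧸ Ideal.span {(X : Polynomial ℂ) ^ 2}

noncomputable instance : CommRing Pone := Ideal.Quotient.commRing _
noncomputable instance : Algebra ℂ Pone := Ideal.Quotient.algebra ℂ

/-- `Q³ = ℂ × ℂ[x]/(x²)`. -/
noncomputable abbrev Qthree : Type := ℂ × Pone

/-- `Q⁴ = ℂ × ℂ × ℂ`. -/
abbrev Qfour : Type := ℂ × ℂ × ℂ

/-!
A finite-dimensional commutative `ℂ`-algebra `A` is Artinian, so by Fitting's lemma it is either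
local or has an idempotent `e ≠ 0, 1`, and then `A ≅ A/(e) × A/(1 - e)` with both factors of
smaller dimension. A local `A` is `ℂ ⊕ 𝔪` with `𝔪` nilpotent. In dimension 2 any `t ≠ 0` in `𝔪`
gives `A ≅ ℂ[x]/(x²)`. In dimension 3, either some `t ∈ 𝔪` has `t² ≠ 0`, so that `1, t, t²` is a
power basis and `A ≅ ℂ[x]/(x³)`, or all squares in `𝔪` vanish, hence by polarization `𝔪² = 0`
and `A` is a quotient of `Q¹` of the same dimension.

The four algebras are distinguished by whether every element is a scalar plus an element of
vanishing square (`Q¹`) or cube (`Q¹`, `Q²`), which fails in a product of two nonzero algebras,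
and by the nonzero nilpotent `(0, x)` of `Q³`.
-/

open Polynomial Module IsLocalRing
open scoped Pointwise

universe u

theorem IsArtinianRing.isLocalRing_of_isIdempotentElem {R : Type*} [CommRing R] [IsArtinianRing R]
    [Nontrivial R] (h : ∀ e : R, IsIdempotentElem e → e = 0 ∨ e = 1) : IsLocalRing R := by
  refine .of_isUnit_or_isUnit_one_sub_self fun a => ?_
  -- Fitting: the chain `(a ^ k)` stabilizes, so `a ^ n = a ^ (n + 1) * y`, and then
  -- `e = (a * y) ^ (n + 1)` is an idempotent with `a ^ n * e = a ^ n`.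
  obtain ⟨n, y, hy⟩ := IsArtinian.exists_pow_succ_smul_dvd a (1 : R)
  simp only [smul_eq_mul, mul_one, Nat.succ_eq_add_one] at hy
  have hpow : ∀ k, a ^ n * (a * y) ^ k = a ^ n := by
    intro k
    induction k with
    | zero => simp
    | succ k ih => rw [pow_succ, ← mul_assoc, ih]; linear_combination hy
  have he : IsIdempotentElem ((a * y) ^ (n + 1)) :=
    calc (a * y) ^ (n + 1) * (a * y) ^ (n + 1)
        = a * y ^ (n + 1) * (a ^ n * (a * y) ^ (n + 1)) := by ring
      _ = (a * y) ^ (n + 1) := by rw [hpow]; ring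
  rcases h _ he with he0 | he1
  · exact .inr (IsNilpotent.isUnit_one_sub ⟨n, by rw [← hpow (n + 1), he0, mul_zero]⟩)
  · exact .inl (isUnit_of_mul_isUnit_left ((isUnit_pow_iff n.succ_ne_zero).mp (he1 ▸ isUnit_one)))

theorem IsLocalRing.isNilpotent_of_mem_maximalIdeal {A : Type*} [CommRing A] [IsArtinianRing A]
    [IsLocalRing A] {x : A} (hx : x ∈ maximalIdeal A) : IsNilpotent x := by
  obtain ⟨k, hk⟩ := IsArtinianRing.isNilpotent_jacobson_bot (R := A)
  rw [IsLocalRing.jacobson_eq_maximalIdeal ⊥ bot_ne_top] at hk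
  exact ⟨k, by simpa [hk] using Ideal.pow_mem_pow hx k⟩

section Split

variable {K : Type*} {A : Type u} [Field K] [CommRing A] [Algebra K A] [FiniteDimensional K A]

theorem IsIdempotentElem.finrank_quotient_span_pos {e : A} (he : IsIdempotentElem e)
    (h1 : e ≠ 1) : 0 < finrank K (A ⧸ Ideal.span {e}) := by
  have : Nontrivial (A ⧸ Ideal.span {e}) := Ideal.Quotient.nontrivial_iff.mpr fun htop =>
    h1 ((IsIdempotentElem.iff_eq_one_of_isUnit (Ideal.span_singleton_eq_top.mp htop)).mp he)
  exact Module.finrank_pos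

theorem IsIdempotentElem.finrank_quotient_span_add {e : A} (he : IsIdempotentElem e) :
    finrank K (A ⧸ Ideal.span {e}) + finrank K (A ⧸ Ideal.span {1 - e}) = finrank K A := by
  rw [← finrank_prod, (AlgEquiv.prodQuotientOfIsIdempotentElem K he he.one_sub
    (add_sub_cancel e 1) he.mul_one_sub_self).toLinearEquiv.finrank_eq]

theorem exists_algEquiv_prod_of_not_isLocalRing [Nontrivial A] (h : ¬ IsLocalRing A) :
    ∃ (B C : Type u) (_ : CommRing B) (_ : CommRing C) (_ : Algebra K B) (_ : Algebra K C),
      Nonempty (A ≃ₐ[K] B × C) ∧ 0 < finrank K B ∧ finrank K B ≤ finrank K C ∧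
        finrank K B + finrank K C = finrank K A := by
  have : IsArtinianRing A := IsArtinianRing.of_finite K A
  obtain ⟨e, he, h0, h1⟩ : ∃ e : A, IsIdempotentElem e ∧ e ≠ 0 ∧ e ≠ 1 := by
    by_contra! H
    exact h (IsArtinianRing.isLocalRing_of_isIdempotentElem fun e he =>
      or_iff_not_imp_left.mpr (H e he))
  have hsum := he.finrank_quotient_span_add (K := K)
  let split := AlgEquiv.prodQuotientOfIsIdempotentElem K he he.one_sub (add_sub_cancel e 1)
    he.mul_one_sub_self
  rcases le_total (finrank K (A ⧸ Ideal.span {e})) (finrank K (A ⧸ Ideal.span {1 - e}))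
    with hle | hle
  · exact ⟨_, _, _, _, _, _, ⟨split⟩, he.finrank_quotient_span_pos h1, hle, hsum⟩
  · exact ⟨_, _, _, _, _, _, ⟨split.trans (.ofRingEquiv (f := RingEquiv.prodComm) fun _ => rfl)⟩,
      he.one_sub.finrank_quotient_span_pos (mt sub_eq_self.mp h0), hle, by omega⟩

end Split

section ResidueField

variable {K A : Type*} [Field K] [IsAlgClosed K] [CommRing A] [Algebra K A] [FiniteDimensional K A]
  [IsLocalRing A]

variable (K A) in
theorem IsLocalRing.bijective_algebraMap_residueField :
    Function.Bijective (algebraMap K (ResidueField A)) :=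
  IsAlgClosed.algebraMap_bijective_of_isIntegral

theorem IsLocalRing.isCompl_span_one_maximalIdeal :
    IsCompl (K ∙ (1 : A)) ((maximalIdeal A).restrictScalars K) := by
  refine ⟨?_, codisjoint_iff.mpr (eq_top_iff.mpr fun a _ => ?_)⟩
  · rw [disjoint_comm, Submodule.disjoint_span_singleton]
    exact fun h => absurd h (IsLocalRing.notMem_maximalIdeal.mpr isUnit_one)
  obtain ⟨c, hc⟩ := (bijective_algebraMap_residueField K A).2 (residue A a)
  have hmem : a - algebraMap K A c ∈ maximalIdeal A := by
    rw [← residue_eq_zero_iff, map_sub, ← hc, IsScalarTower.algebraMap_apply K A (ResidueField A),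
      ResidueField.algebraMap_eq, sub_self]
  rw [← sub_add_cancel a (algebraMap K A c), add_comm]
  refine Submodule.add_mem_sup ?_ hmem
  rw [Algebra.algebraMap_eq_smul_one]
  exact Submodule.smul_mem _ _ (Submodule.mem_span_singleton_self 1)

variable (K A) in
theorem IsLocalRing.finrank_maximalIdeal_add_one :
    finrank K ((maximalIdeal A).restrictScalars K) + 1 = finrank K A := by
  rw [← Submodule.finrank_add_eq_of_isCompl (isCompl_span_one_maximalIdeal (K := K) (A := A)),
    finrank_span_singleton one_ne_zero, add_comm]

end ResidueField

section Monogenic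

variable {K A : Type*} [Field K] [CommRing A] [Algebra K A]

theorem minpoly_eq_X_pow_of_isNilpotent {t : A} (ht : IsNilpotent t) :
    ∃ k, minpoly K t = X ^ k := by
  obtain ⟨n, hn⟩ := ht
  have hint : IsIntegral K t := ⟨X ^ n, monic_X_pow n, by simp [hn]⟩
  obtain ⟨k, -, hk⟩ := (dvd_prime_pow prime_X n).mp (minpoly.dvd K t (by simp [hn]))
  exact ⟨k, eq_of_monic_of_associated (minpoly.monic hint) (monic_X_pow k) hk⟩

theorem nonempty_algEquiv_adjoinRoot_X_pow_of_isNilpotent {n : ℕ} (hA : finrank K A = n + 1)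
    {t : A} (ht : IsNilpotent t) (htn : t ^ n ≠ 0) :
    Nonempty (A ≃ₐ[K] AdjoinRoot (X ^ (n + 1) : K[X])) := by
  have : FiniteDimensional K A := Module.finite_of_finrank_pos (by omega)
  obtain ⟨k, hk⟩ := minpoly_eq_X_pow_of_isNilpotent (K := K) ht
  obtain rfl : k = n + 1 := by
    have hle : k ≤ n + 1 := by simpa [hk, hA] using minpoly.natDegree_le (A := K) t
    have htk : t ^ k = 0 := by simpa [hk] using minpoly.aeval K t
    by_contra hne
    exact htn (pow_eq_zero_of_le (by omega) htk)
  have hli : LinearIndependent K fun i : Fin (n + 1) => t ^ (i : ℕ) := by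
    have := linearIndependent_pow (K := K) t
    rwa [hk, natDegree_X_pow] at this
  let pb : PowerBasis K A :=
    { gen := t, dim := n + 1, basis := basisOfLinearIndependentOfCardEqFinrank hli (by simp [hA])
      basis_eq_pow := by simp }
  exact ⟨(AdjoinRoot.equiv' _ pb (by rw [show pb.gen = t from rfl, hk, AdjoinRoot.aeval_eq,
    AdjoinRoot.mk_self]) (by rw [← hk]; exact minpoly.aeval K t)).symm⟩

end Monogenic

theorem mul_eq_zero_of_forall_mul_self_eq_zero {K A : Type*} [Field K] [CharZero K] [CommRing A]
    [Algebra K A] {p : Submodule K A} (h : ∀ t ∈ p, t * t = 0) {u v : A} (hu : u ∈ p)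
    (hv : v ∈ p) : u * v = 0 := by
  have h2 : (2 : K) • (u * v) = 0 := by
    rw [two_smul]
    linear_combination h (u + v) (p.add_mem hu hv) - h u hu - h v hv
  exact (smul_eq_zero.mp h2).resolve_left two_ne_zero

theorem span_insert_one_eq_top_of_mul_eq_zero {K B : Type*} [CommSemiring K] [Semiring B]
    [Algebra K B] {s : Set B} (hs : Algebra.adjoin K s = ⊤) (hmul : ∀ x ∈ s, ∀ y ∈ s, x * y = 0) :
    Submodule.span K (insert 1 s) = ⊤ := by
  let S : Subalgebra K B := (Submodule.span K (insert 1 s)).toSubalgebra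
    (Submodule.subset_span (Set.mem_insert _ _)) fun x y hx hy => by
      have hxy := Submodule.mul_mem_mul hx hy
      rw [Submodule.span_mul_span] at hxy
      refine Submodule.span_le.mpr ?_ hxy
      rintro _ ⟨a, ha, b, hb, rfl⟩
      rcases ha with rfl | ha
      · simpa using Submodule.subset_span hb
      rcases hb with rfl | hb
      · simpa using Submodule.subset_span (Set.mem_insert_of_mem _ ha)
      · simp [hmul a ha b hb]
  have hS : Algebra.adjoin K s ≤ S :=
    Algebra.adjoin_le fun x hx => Submodule.subset_span (Set.mem_insert_of_mem _ hx)
  rw [hs] at hS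
  exact eq_top_iff.mpr fun x _ => hS Algebra.mem_top

section ScalarAddNilpotent

variable (K : Type*) [CommSemiring K]

def IsScalarAddNilpotent (k : ℕ) (B : Type*) [Ring B] [Algebra K B] : Prop :=
  ∀ x : B, ∃ c : K, (x - algebraMap K B c) ^ k = 0

variable {K}

theorem IsScalarAddNilpotent.of_algEquiv {k : ℕ} {B C : Type*} [Ring B] [Ring C] [Algebra K B]
    [Algebra K C] (e : B ≃ₐ[K] C) (h : IsScalarAddNilpotent K k B) : IsScalarAddNilpotent K k C :=
  fun x => (h (e.symm x)).imp fun c hc => by simpa using congrArg e hc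

theorem isScalarAddNilpotent_two_of_mul_eq_zero {B : Type*} [CommRing B] [Algebra K B]
    {s : Set B} (hs : Algebra.adjoin K s = ⊤) (hmul : ∀ x ∈ s, ∀ y ∈ s, x * y = 0) :
    IsScalarAddNilpotent K 2 B := by
  intro x
  have hx : x ∈ Submodule.span K (insert 1 s) := by
    rw [span_insert_one_eq_top_of_mul_eq_zero hs hmul]; trivial
  rw [Submodule.span_insert, Submodule.mem_sup] at hx
  obtain ⟨_, hu, w, hw, rfl⟩ := hx
  obtain ⟨c, rfl⟩ := Submodule.mem_span_singleton.mp hu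
  refine ⟨c, ?_⟩
  have hww : w * w ∈ Submodule.span K (s * s) := by
    rw [← Submodule.span_mul_span]; exact Submodule.mul_mem_mul hw hw
  have hss : Submodule.span K (s * s) = ⊥ := by
    rw [Submodule.span_eq_bot]
    rintro _ ⟨a, ha, b, hb, rfl⟩
    exact hmul a ha b hb
  rw [hss, Submodule.mem_bot] at hww
  rw [Algebra.algebraMap_eq_smul_one, add_sub_cancel_left, sq, hww]

theorem not_isScalarAddNilpotent_prod {K : Type*} [Field K] {k : ℕ} {B C : Type*} [Ring B]
    [Ring C] [Algebra K B] [Algebra K C] [Nontrivial B] [Nontrivial C] :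
    ¬ IsScalarAddNilpotent K k (B × C) := by
  intro h
  obtain ⟨c, hc⟩ := h (1, 0)
  have h1 : (algebraMap K B (1 - c)) ^ k = 0 := by simpa using congrArg Prod.fst hc
  rw [← map_pow, map_eq_zero_iff _ (algebraMap K B).injective] at h1
  obtain rfl : c = 1 := (sub_eq_zero.mp (eq_zero_of_pow_eq_zero h1)).symm
  have h2 : (-1 : C) ^ k = 0 := by simpa using congrArg Prod.snd hc
  exact (isUnit_one.neg.pow k).ne_zero h2

end ScalarAddNilpotent

section AdjoinRootXPow

variable {K : Type*} [Field K]

theorem AdjoinRoot.root_X_pow_pow (n : ℕ) : AdjoinRoot.root (X ^ n : K[X]) ^ n = 0 := by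
  rw [← AdjoinRoot.mk_X, ← map_pow, AdjoinRoot.mk_self]

theorem AdjoinRoot.root_X_pow_ne_zero {n : ℕ} (hn : 1 < n) :
    AdjoinRoot.root (X ^ n : K[X]) ≠ 0 := by
  rw [← AdjoinRoot.mk_X, Ne, AdjoinRoot.mk_eq_zero]
  intro h
  have := natDegree_le_of_dvd h X_ne_zero
  simp at this
  omega

theorem isScalarAddNilpotent_adjoinRoot_X_pow (n : ℕ) :
    IsScalarAddNilpotent K n (AdjoinRoot (X ^ n : K[X])) := by
  intro x
  induction x using AdjoinRoot.induction_on with | ih p => ?_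
  refine ⟨p.coeff 0, ?_⟩
  rw [AdjoinRoot.algebraMap_eq, AdjoinRoot.of, RingHom.comp_apply, ← map_sub, ← map_pow,
    AdjoinRoot.mk_eq_zero]
  exact pow_dvd_pow_of_dvd X_dvd_sub_C n

theorem not_isScalarAddNilpotent_adjoinRoot_X_pow (n : ℕ) :
    ¬ IsScalarAddNilpotent K n (AdjoinRoot (X ^ (n + 1) : K[X])) := by
  intro h
  obtain ⟨c, hc⟩ := h (AdjoinRoot.root _)
  rw [AdjoinRoot.algebraMap_eq, AdjoinRoot.of, RingHom.comp_apply, ← AdjoinRoot.mk_X, ← map_sub,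
    ← map_pow, AdjoinRoot.mk_eq_zero] at hc
  have := natDegree_le_of_dvd hc (pow_ne_zero n (X_sub_C_ne_zero c))
  simp at this

end AdjoinRootXPow

namespace Qone

open MvPolynomial

noncomputable def mk : MvPolynomial (Fin 2) ℂ →ₐ[ℂ] Qone := Ideal.Quotient.mkₐ ℂ _

noncomputable def gen (i : Fin 2) : Qone := mk (X i)

theorem gen_mul_gen (i j : Fin 2) : gen i * gen j = 0 := by
  rw [gen, gen, ← map_mul]
  refine Ideal.Quotient.eq_zero_iff_mem.mpr ?_
  fin_cases i <;> fin_cases j <;> refine Ideal.subset_span ?_ <;> simp [sq, mul_comm]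

theorem adjoin_range_gen : Algebra.adjoin ℂ (Set.range gen) = ⊤ := by
  rw [show Set.range gen = mk '' Set.range X from Set.range_comp _ _, Algebra.adjoin_image,
    MvPolynomial.adjoin_range_X, Algebra.map_top, AlgHom.range_eq_top]
  exact Ideal.Quotient.mk_surjective

theorem span_eq_top : Submodule.span ℂ (Set.range ![1, gen 0, gen 1]) = ⊤ := by
  rw [← span_insert_one_eq_top_of_mul_eq_zero adjoin_range_gen
    (by rintro _ ⟨i, rfl⟩ _ ⟨j, rfl⟩; exact gen_mul_gen i j)]
  congr
  ext
  simp only [Set.mem_insert_iff, Set.mem_range, Fin.exists_fin_succ, Fin.exists_fin_zero]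
  simp [eq_comm]

theorem isScalarAddNilpotent : IsScalarAddNilpotent ℂ 2 Qone :=
  isScalarAddNilpotent_two_of_mul_eq_zero adjoin_range_gen
    (by rintro _ ⟨i, rfl⟩ _ ⟨j, rfl⟩; exact gen_mul_gen i j)

instance : Module.Finite ℂ Qone :=
  ⟨Submodule.fg_def.mpr ⟨_, Set.finite_range _, span_eq_top⟩⟩

-- Instance search pairs `Module ℂ Qone` with the additive group of `CommRing Qone`, which is not
-- reducibly the one underlying `Algebra ℂ Qone`, so the module structure is given explicitly.
instance : Module.Free ℂ Qone := @Module.Free.of_divisionRing ℂ Qone _ _ Algebra.toModule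

theorem finrank_le : finrank ℂ Qone ≤ 3 := by
  simpa using finrank_le_of_span_eq_top span_eq_top

variable {A : Type*} [CommRing A] [Algebra ℂ A]

noncomputable def lift (t : Fin 2 → A) (ht : ∀ i j, t i * t j = 0) : Qone →ₐ[ℂ] A :=
  Ideal.Quotient.liftₐ _ (MvPolynomial.aeval t) fun a ha => by
    refine Ideal.span_le (I := RingHom.ker (MvPolynomial.aeval t)).mpr ?_ ha
    rintro _ (rfl | rfl | rfl) <;> simp [sq, ht]

@[simp]
theorem lift_gen (t : Fin 2 → A) (ht : ∀ i j, t i * t j = 0) (i : Fin 2) :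
    lift t ht (gen i) = t i :=
  MvPolynomial.aeval_X t i

end Qone

section LocalClassification

variable {A : Type*} [CommRing A] [Algebra ℂ A] [FiniteDimensional ℂ A] [IsLocalRing A]

theorem nonempty_algEquiv_pone_of_isLocalRing (h : finrank ℂ A = 2) :
    Nonempty (A ≃ₐ[ℂ] Pone) := by
  have : IsArtinianRing A := IsArtinianRing.of_finite ℂ A
  have hm := finrank_maximalIdeal_add_one ℂ A
  obtain ⟨t, htm, ht0⟩ := Submodule.exists_mem_ne_zero_of_ne_bot
    (p := (maximalIdeal A).restrictScalars ℂ) fun hbot => by rw [hbot, finrank_bot] at hm; omega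
  exact nonempty_algEquiv_adjoinRoot_X_pow_of_isNilpotent (n := 1) h
    (isNilpotent_of_mem_maximalIdeal htm) (by rwa [pow_one])

theorem nonempty_algEquiv_qone_of_isLocalRing (h : finrank ℂ A = 3)
    (hsq : ∀ t ∈ maximalIdeal A, t * t = 0) : Nonempty (A ≃ₐ[ℂ] Qone) := by
  have hm : finrank ℂ ((maximalIdeal A).restrictScalars ℂ) = 2 := by
    have := finrank_maximalIdeal_add_one ℂ A; omega
  obtain ⟨t, hspan⟩ : ∃ t : Fin 2 → A,
      Submodule.span ℂ (Set.range t) = (maximalIdeal A).restrictScalars ℂ := by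
    let b := Module.finBasisOfFinrankEq ℂ _ hm
    refine ⟨((maximalIdeal A).restrictScalars ℂ).subtype ∘ b, ?_⟩
    rw [Set.range_comp, Submodule.span_image, b.span_eq, Submodule.map_top, Submodule.range_subtype]
  have htm (i : Fin 2) : t i ∈ (maximalIdeal A).restrictScalars ℂ :=
    hspan ▸ Submodule.subset_span (Set.mem_range_self i)
  let g := Qone.lift t fun i j => mul_eq_zero_of_forall_mul_self_eq_zero hsq (htm i) (htm j)
  have hg : Function.Surjective g := by
    intro a
    suffices ⊤ ≤ Subalgebra.toSubmodule g.range from this Submodule.mem_top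
    rw [← isCompl_span_one_maximalIdeal.sup_eq_top, sup_le_iff,
      Submodule.span_singleton_le_iff_mem, ← hspan, Submodule.span_le]
    refine ⟨one_mem g.range, ?_⟩
    rintro _ ⟨i, rfl⟩
    exact ⟨Qone.gen i, Qone.lift_gen _ _ i⟩
  exact ⟨(AlgEquiv.ofBijective g (OrzechProperty.bijective_of_surjective_of_finrank_le
    g.toLinearMap hg (h ▸ Qone.finrank_le))).symm⟩

theorem nonempty_algEquiv_qone_or_qtwo_of_isLocalRing (h : finrank ℂ A = 3) :
    Nonempty (A ≃ₐ[ℂ] Qone) ∨ Nonempty (A ≃ₐ[ℂ] Qtwo) := by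
  have : IsArtinianRing A := IsArtinianRing.of_finite ℂ A
  by_cases hsq : ∀ t ∈ maximalIdeal A, t * t = 0
  · exact .inl (nonempty_algEquiv_qone_of_isLocalRing h hsq)
  push Not at hsq
  obtain ⟨t, htm, ht⟩ := hsq
  exact .inr (nonempty_algEquiv_adjoinRoot_X_pow_of_isNilpotent (n := 2) h
    (isNilpotent_of_mem_maximalIdeal htm) (by rwa [sq]))

end LocalClassification

section Classification

variable {A : Type u} [CommRing A] [Algebra ℂ A]

theorem nonempty_algEquiv_of_finrank_eq_two (h : finrank ℂ A = 2) :
    Nonempty (A ≃ₐ[ℂ] ℂ × ℂ) ∨ Nonempty (A ≃ₐ[ℂ] Pone) := by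
  have : FiniteDimensional ℂ A := Module.finite_of_finrank_pos (by omega)
  have : Nontrivial A := Module.nontrivial_of_finrank_pos (R := ℂ) (by omega)
  by_cases hA : IsLocalRing A
  · exact .inr (nonempty_algEquiv_pone_of_isLocalRing h)
  obtain ⟨B, C, _, _, _, _, ⟨e⟩, hB, hBC, hsum⟩ :=
    exists_algEquiv_prod_of_not_isLocalRing (K := ℂ) hA
  obtain ⟨eB⟩ := nonempty_algEquiv_iff_finrank_eq_one.mpr (show finrank ℂ B = 1 by omega)
  obtain ⟨eC⟩ := nonempty_algEquiv_iff_finrank_eq_one.mpr (show finrank ℂ C = 1 by omega)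
  exact .inl ⟨e.trans (eB.symm.prodCongr eC.symm)⟩

theorem nonempty_algEquiv_of_finrank_eq_three (h : finrank ℂ A = 3) :
    Nonempty (A ≃ₐ[ℂ] Qone) ∨ Nonempty (A ≃ₐ[ℂ] Qtwo) ∨
      Nonempty (A ≃ₐ[ℂ] Qthree) ∨ Nonempty (A ≃ₐ[ℂ] Qfour) := by
  have : FiniteDimensional ℂ A := Module.finite_of_finrank_pos (by omega)
  have : Nontrivial A := Module.nontrivial_of_finrank_pos (R := ℂ) (by omega)
  by_cases hA : IsLocalRing A
  · exact (nonempty_algEquiv_qone_or_qtwo_of_isLocalRing h).imp_right .inl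
  obtain ⟨B, C, _, _, _, _, ⟨e⟩, hB, hBC, hsum⟩ :=
    exists_algEquiv_prod_of_not_isLocalRing (K := ℂ) hA
  obtain ⟨eB⟩ := nonempty_algEquiv_iff_finrank_eq_one.mpr (show finrank ℂ B = 1 by omega)
  rcases nonempty_algEquiv_of_finrank_eq_two (show finrank ℂ C = 2 by omega) with ⟨⟨eC⟩⟩ | ⟨⟨eC⟩⟩
  · exact .inr <| .inr <| .inr ⟨e.trans (eB.symm.prodCongr eC)⟩
  · exact .inr <| .inr <| .inl ⟨e.trans (eB.symm.prodCongr eC)⟩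

end Classification

/-- Up to isomorphism there are exactly four commutative associative unital ℂ-algebras
of dimension 3: `Q¹ = ℂ[x₁,x₂]/(x₁²,x₁x₂,x₂²)`, `Q² = ℂ[x]/(x³)`,
`Q³ = ℂ × ℂ[x]/(x²)` and `Q⁴ = ℂ × ℂ × ℂ`. -/
theorem three_dimensional_algebras_classification :
    (∀ (A : Type) [CommRing A] [Algebra ℂ A], Module.finrank ℂ A = 3 →
      (Nonempty (A ≃ₐ[ℂ] Qone) ∨ Nonempty (A ≃ₐ[ℂ] Qtwo) ∨
       Nonempty (A ≃ₐ[ℂ] Qthree) ∨ Nonempty (A ≃ₐ[ℂ] Qfour))) ∧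
    ¬ Nonempty (Qone ≃ₐ[ℂ] Qtwo) ∧ ¬ Nonempty (Qone ≃ₐ[ℂ] Qthree) ∧
    ¬ Nonempty (Qone ≃ₐ[ℂ] Qfour) ∧ ¬ Nonempty (Qtwo ≃ₐ[ℂ] Qthree) ∧
    ¬ Nonempty (Qtwo ≃ₐ[ℂ] Qfour) ∧ ¬ Nonempty (Qthree ≃ₐ[ℂ] Qfour) := by
  have : Nontrivial Pone := AdjoinRoot.nontrivial _ (by simp)
  have hQtwo : IsScalarAddNilpotent ℂ 3 Qtwo := isScalarAddNilpotent_adjoinRoot_X_pow 3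
  refine ⟨fun A _ _ => nonempty_algEquiv_of_finrank_eq_three, ?_, ?_, ?_, ?_, ?_, ?_⟩
  · exact fun ⟨e⟩ => not_isScalarAddNilpotent_adjoinRoot_X_pow 2
      (Qone.isScalarAddNilpotent.of_algEquiv e)
  · exact fun ⟨e⟩ => not_isScalarAddNilpotent_prod (Qone.isScalarAddNilpotent.of_algEquiv e)
  · exact fun ⟨e⟩ => not_isScalarAddNilpotent_prod (Qone.isScalarAddNilpotent.of_algEquiv e)
  · exact fun ⟨e⟩ => not_isScalarAddNilpotent_prod (hQtwo.of_algEquiv e)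
  · exact fun ⟨e⟩ => not_isScalarAddNilpotent_prod (hQtwo.of_algEquiv e)
  · rintro ⟨e⟩
    have := isReduced_of_injective e e.injective
    have hnil : IsNilpotent ((0, AdjoinRoot.root _) : Qthree) :=
      ⟨2, Prod.ext (zero_pow two_ne_zero) (AdjoinRoot.root_X_pow_pow 2)⟩
    exact AdjoinRoot.root_X_pow_ne_zero one_lt_two (congrArg Prod.snd hnil.eq_zero)
end

section
/- Let A be a 3-dimensional commutative associative unital ℂ-algebra with basis e, ψ₁, ψ₂ (e the unit) whose multiplication satisfies ψ₁² = (a₂/3)ψ₁ + a₃ψ₂ − (2/3)R₁e, ψ₁ψ₂ = −(c₃/3)ψ₁ − (a₂/3)ψ₂ + R₃e, ψ₂² = c₂ψ₁ + (c₃/3)ψ₂ − (2/3)R₂e, for scalars a₂,a₃,c₂,c₃ ∈ ℂ and R₁ = a₃c₃ − a₂²/3, R₂ = a₂c₂ − c₃²/3, R₃ = a₃c₂ − a₂c₃/9. Then ψ₁ satisfies ψ₁³ + R₁ψ₁ + ((2/9)a₂R₁ − a₃R₃)e = 0. -/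
/-- In a 3-dimensional commutative associative unital ℂ-algebra with basis `1, ψ₁, ψ₂`
whose multiplication is given by
`ψ₁² = (a₂/3)ψ₁ + a₃ψ₂ − (2/3)R₁·1`, `ψ₁ψ₂ = −(c₃/3)ψ₁ − (a₂/3)ψ₂ + R₃·1`,
`ψ₂² = c₂ψ₁ + (c₃/3)ψ₂ − (2/3)R₂·1`, where `R₁ = a₃c₃ − a₂²/3`, `R₂ = a₂c₂ − c₃²/3`,
`R₃ = a₃c₂ − a₂c₃/9`, the element `ψ₁` satisfies
`ψ₁³ + R₁ψ₁ + ((2/9)a₂R₁ − a₃R₃)·1 = 0`. -/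
theorem psi_one_cubic_relation
    (A : Type) [CommRing A] [Algebra ℂ A]
    (ψ₁ ψ₂ : A) (a₂ a₃ c₂ c₃ : ℂ)
    (hdim : Module.finrank ℂ A = 3)
    (hbasis : LinearIndependent ℂ ![(1 : A), ψ₁, ψ₂])
    (h11 : ψ₁ * ψ₁ = (a₂ / 3) • ψ₁ + a₃ • ψ₂ - (2 / 3 * (a₃ * c₃ - a₂ ^ 2 / 3)) • (1 : A))
    (h12 : ψ₁ * ψ₂ = (-(c₃ / 3)) • ψ₁ + (-(a₂ / 3)) • ψ₂ + (a₃ * c₂ - a₂ * c₃ / 9) • (1 : A))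
    (h22 : ψ₂ * ψ₂ = c₂ • ψ₁ + (c₃ / 3) • ψ₂ - (2 / 3 * (a₂ * c₂ - c₃ ^ 2 / 3)) • (1 : A)) :
    ψ₁ * ψ₁ * ψ₁ + (a₃ * c₃ - a₂ ^ 2 / 3) • ψ₁ +
      ((2 / 9) * a₂ * (a₃ * c₃ - a₂ ^ 2 / 3) - a₃ * (a₃ * c₂ - a₂ * c₃ / 9)) • (1 : A) = 0 := by
  have key : ψ₁ * ψ₁ * ψ₁ =
      (a₂ / 3) • (ψ₁ * ψ₁) + a₃ • (ψ₁ * ψ₂)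
        - (2 / 3 * (a₃ * c₃ - a₂ ^ 2 / 3)) • ψ₁ := by
    conv_lhs => rw [h11]
    rw [sub_mul, add_mul, smul_mul_assoc, smul_mul_assoc, smul_mul_assoc, one_mul,
      mul_comm ψ₂ ψ₁]
  rw [key, h11, h12]
  module
end

section
/- Define on ℂ-vector fields of ℂ³ with coordinate fields ∂₁, ∂₂, ∂₃ a commutative ℂ-bilinear multiplication determined by ∂₁ being the unit and (∂₂ − b₃∂₁)² = a₁∂₁ + a₂(∂₂ − b₃∂₁) + a₃(∂₃ − b₂∂₁), (∂₂ − b₃∂₁)(∂₃ − b₂∂₁) = b₁∂₁, (∂₃ − b₂∂₁)² = c₁∂₁ + c₂(∂₂ − b₃∂₁) + c₃(∂₃ − b₂∂₁), with scalars a₁,a₂,a₃,b₁,b₂,b₃,c₁,c₂,c₃ ∈ ℂ. Then this multiplication is associative if and only if a₁ = −a₃c₃, b₁ = a₃c₂, and c₁ = −a₂c₂. -/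
/-- The commutative multiplication on the 3-dimensional space `ℂ × ℂ × ℂ` with basis
`e, u, v` (components: `e`-, `u`- and `v`-coordinates), where `e` is the unit and
`u·u = a₁e + a₂u + a₃v`, `u·v = b₁e`, `v·v = c₁e + c₂u + c₃v`. -/
def tripleMul (a₁ a₂ a₃ b₁ c₁ c₂ c₃ : ℂ) (x y : ℂ × ℂ × ℂ) : ℂ × ℂ × ℂ :=
  (x.1 * y.1 + a₁ * (x.2.1 * y.2.1) + b₁ * (x.2.1 * y.2.2 + x.2.2 * y.2.1)
      + c₁ * (x.2.2 * y.2.2),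
   x.1 * y.2.1 + x.2.1 * y.1 + a₂ * (x.2.1 * y.2.1) + c₂ * (x.2.2 * y.2.2),
   x.1 * y.2.2 + x.2.2 * y.1 + a₃ * (x.2.1 * y.2.1) + c₃ * (x.2.2 * y.2.2))

/-- The multiplication determined by `∂₁` being the unit,
`(∂₂ − b₃∂₁)² = a₁∂₁ + a₂(∂₂ − b₃∂₁) + a₃(∂₃ − b₂∂₁)`,
`(∂₂ − b₃∂₁)(∂₃ − b₂∂₁) = b₁∂₁`,
`(∂₃ − b₂∂₁)² = c₁∂₁ + c₂(∂₂ − b₃∂₁) + c₃(∂₃ − b₂∂₁)`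
is associative if and only if `a₁ = −a₃c₃`, `b₁ = a₃c₂` and `c₁ = −a₂c₂`. -/
theorem tripleMul_assoc_iff (a₁ a₂ a₃ b₁ c₁ c₂ c₃ : ℂ) :
    (∀ x y z : ℂ × ℂ × ℂ,
      tripleMul a₁ a₂ a₃ b₁ c₁ c₂ c₃ (tripleMul a₁ a₂ a₃ b₁ c₁ c₂ c₃ x y) z =
      tripleMul a₁ a₂ a₃ b₁ c₁ c₂ c₃ x (tripleMul a₁ a₂ a₃ b₁ c₁ c₂ c₃ y z)) ↔
    (a₁ = -(a₃ * c₃) ∧ b₁ = a₃ * c₂ ∧ c₁ = -(a₂ * c₂)) := by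
  constructor
  · intro h
    have h1 := h (0,1,0) (0,1,0) (0,0,1)
    have h2 := h (0,0,1) (0,0,1) (0,1,0)
    simp [tripleMul, Prod.ext_iff] at h1 h2
    refine ⟨by linear_combination h1.2.2, by linear_combination -h1.2.1, by linear_combination h2.2.1⟩
  · rintro ⟨ha, hb, hc⟩ x y z
    subst ha hb hc
    simp only [tripleMul, Prod.mk.injEq]
    refine ⟨by ring, by ring, by ring⟩
end

section
/- Let A be the 3-dimensional commutative associative ℂ-algebra with basis e, u, v, unit e, and products u² = −a₃c₃·e + a₂u + a₃v, u·v = a₃c₂·e, v² = −a₂c₂·e + c₂u + c₃v. Set R₁ = a₃c₃ − a₂²/3, R₂ = a₂c₂ − c₃²/3, R₃ = a₃c₂ − a₂c₃/9. If R₁ = R₂ = R₃ = 0 and a₃ ≠ 0, then A is isomorphic to ℂ[x]/(x³). -/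
/-!
The vanishing of `R₁` and `R₃` says exactly that `w = u - a₂/3` satisfies `w³ = 0`: expanding
`w³` and reducing `u³ = u · u²` with the multiplication table leaves
`(a₂²/3 - a₃c₃) u + (a₃²c₂ - a₂³/27)`. Since `a₃ ≠ 0`, the relation for `u²` expresses `v` as a
polynomial in `u`, so `w` generates `A`. Hence `p ↦ p(w)` induces a surjection
`ℂ[x]/(x³) → A` between spaces of dimension `3`, which is an isomorphism.
-/

open Polynomial Module

theorem nonempty_algEquiv_quotient_span_X_pow {K A : Type*} [Field K] [CommRing A] [Algebra K A]
    [FiniteDimensional K A] {n : ℕ} (hA : finrank K A = n) {w : A} (hw : w ^ n = 0)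
    (hgen : Algebra.adjoin K {w} = ⊤) :
    Nonempty (A ≃ₐ[K] K[X] ⧸ Ideal.span {(X : K[X]) ^ n}) := by
  have hker : ∀ p ∈ Ideal.span {(X : K[X]) ^ n}, aeval w p = 0 := by
    intro p hp
    obtain ⟨q, rfl⟩ := Ideal.mem_span_singleton'.mp hp
    simp [hw]
  let ψ := Ideal.Quotient.liftₐ (Ideal.span {(X : K[X]) ^ n}) (aeval w) hker
  have hsurj : Function.Surjective ψ := by
    intro a
    have ha : a ∈ (aeval (R := K) w).range := by
      rw [← Algebra.adjoin_singleton_eq_range_aeval, hgen]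
      trivial
    obtain ⟨p, rfl⟩ := ha
    exact ⟨Ideal.Quotient.mk _ p, rfl⟩
  have : FiniteDimensional K (K[X] ⧸ Ideal.span {(X : K[X]) ^ n}) :=
    (monic_X_pow n).finite_adjoinRoot
  have hdim : finrank K (K[X] ⧸ Ideal.span {(X : K[X]) ^ n}) = finrank K A := by
    rw [finrank_quotient_span_eq_natDegree, natDegree_X_pow, hA]
  have hinj : Function.Injective ψ :=
    (LinearMap.injective_iff_surjective_of_finrank_eq_finrank hdim (f := ψ.toLinearMap)).mpr hsurj
  exact ⟨(AlgEquiv.ofBijective ψ ⟨hinj, hsurj⟩).symm⟩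

theorem sub_algebraMap_pow_three_eq_zero {R A : Type*} [CommRing R] [CommRing A] [Algebra R A]
    {u v : A} {a₂ a₃ c₂ c₃ t : R}
    (huu : u * u = (-(a₃ * c₃)) • (1 : A) + a₂ • u + a₃ • v) (huv : u * v = (a₃ * c₂) • (1 : A))
    (ha₂ : a₂ = 3 * t) (hc₃ : a₃ * c₃ = 3 * t ^ 2) (hc₂ : a₃ ^ 2 * c₂ = t ^ 3) :
    (u - algebraMap R A t) ^ 3 = 0 := by
  simp only [Algebra.smul_def, map_mul, map_neg, mul_one] at huu huv
  have ha₂' := congrArg (algebraMap R A) ha₂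
  have hc₃' := congrArg (algebraMap R A) hc₃
  have hc₂' := congrArg (algebraMap R A) hc₂
  simp only [map_mul, map_pow, map_ofNat] at ha₂' hc₃' hc₂'
  linear_combination u * huu + algebraMap R A a₃ * huv - u * hc₃' + u ^ 2 * ha₂' + hc₂'

theorem adjoin_singleton_eq_top_of_span {K A : Type*} [Field K] [CommRing A] [Algebra K A]
    {u v : A} {a₂ a₃ c₃ : K} (hspan : Submodule.span K {(1 : A), u, v} = ⊤)
    (huu : u * u = (-(a₃ * c₃)) • (1 : A) + a₂ • u + a₃ • v) (ha₃ : a₃ ≠ 0) :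
    Algebra.adjoin K {u} = ⊤ := by
  have hu : u ∈ Algebra.adjoin K {u} := Algebra.self_mem_adjoin_singleton K u
  have hv : v = a₃⁻¹ • (u * u + (a₃ * c₃) • (1 : A) - a₂ • u) := by
    rw [huu, smul_sub, smul_add, smul_add, inv_smul_smul₀ ha₃]
    module
  have hspan_le : Submodule.span K {(1 : A), u, v} ≤
      Subalgebra.toSubmodule (Algebra.adjoin K {u}) := by
    rw [Submodule.span_le]
    rintro x (rfl | rfl | rfl)
    · exact Subalgebra.one_mem _
    · exact hu
    · rw [hv]
      exact Subalgebra.smul_mem _ (Subalgebra.sub_mem _ (Subalgebra.add_mem _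
        (Subalgebra.mul_mem _ hu hu) (Subalgebra.smul_mem _ (Subalgebra.one_mem _) _))
        (Subalgebra.smul_mem _ hu _)) _
  exact eq_top_iff.mpr fun x _ => hspan_le (hspan ▸ Submodule.mem_top)

theorem iso_Qtwo_of_R_vanishing_general
    (A : Type) [CommRing A] [Algebra ℂ A]
    (u v : A) (a₂ a₃ c₂ c₃ : ℂ)
    (hdim : Module.finrank ℂ A = 3)
    (hspan : Submodule.span ℂ {(1 : A), u, v} = ⊤)
    (huu : u * u = (-(a₃ * c₃)) • (1 : A) + a₂ • u + a₃ • v)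
    (huv : u * v = (a₃ * c₂) • (1 : A))
    (hR₁ : a₃ * c₃ - a₂ ^ 2 / 3 = 0)
    (hR₃ : a₃ * c₂ - a₂ * c₃ / 9 = 0)
    (ha₃ : a₃ ≠ 0) :
    Nonempty (A ≃ₐ[ℂ] Qtwo) := by
  set w := u - algebraMap ℂ A (a₂ / 3)
  have hw : w ^ 3 = 0 :=
    sub_algebraMap_pow_three_eq_zero huu huv (by ring) (by linear_combination hR₁)
      (by linear_combination a₃ * hR₃ + a₂ / 9 * hR₁)
  have hgen : Algebra.adjoin ℂ {w} = ⊤ := by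
    rw [eq_top_iff, ← adjoin_singleton_eq_top_of_span hspan huu ha₃, Algebra.adjoin_le_iff,
      Set.singleton_subset_iff]
    simpa [w] using add_mem (Algebra.self_mem_adjoin_singleton ℂ w)
      (Subalgebra.algebraMap_mem (Algebra.adjoin ℂ {w}) (a₂ / 3))
  have : FiniteDimensional ℂ A := Module.finite_of_finrank_eq_succ hdim
  exact nonempty_algEquiv_quotient_span_X_pow hdim hw hgen

/-- Let `A` be the 3-dimensional commutative associative unital ℂ-algebra with basis
`1, u, v` and products `u² = −a₃c₃·1 + a₂u + a₃v`, `u·v = a₃c₂·1`,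
`v² = −a₂c₂·1 + c₂u + c₃v`. Set `R₁ = a₃c₃ − a₂²/3`, `R₂ = a₂c₂ − c₃²/3`,
`R₃ = a₃c₂ − a₂c₃/9`. If `R₁ = R₂ = R₃ = 0` and `a₃ ≠ 0`, then `A` is isomorphic to
`ℂ[x]/(x³)`. -/
theorem iso_Qtwo_of_R_vanishing
    (A : Type) [CommRing A] [Algebra ℂ A]
    (u v : A) (a₂ a₃ c₂ c₃ : ℂ)
    (hdim : Module.finrank ℂ A = 3)
    (hspan : Submodule.span ℂ {(1 : A), u, v} = ⊤)
    (huu : u * u = (-(a₃ * c₃)) • (1 : A) + a₂ • u + a₃ • v)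
    (huv : u * v = (a₃ * c₂) • (1 : A))
    (hvv : v * v = (-(a₂ * c₂)) • (1 : A) + c₂ • u + c₃ • v)
    (hR₁ : a₃ * c₃ - a₂ ^ 2 / 3 = 0)
    (hR₂ : a₂ * c₂ - c₃ ^ 2 / 3 = 0)
    (hR₃ : a₃ * c₂ - a₂ * c₃ / 9 = 0)
    (ha₃ : a₃ ≠ 0) :
    Nonempty (A ≃ₐ[ℂ] Qtwo) :=
  iso_Qtwo_of_R_vanishing_general A u v a₂ a₃ c₂ c₃ hdim hspan huu huv hR₁ hR₃ ha₃
end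

section
/- On ℂ² with coordinates (t₂,t₃), let b₂ ∈ ℂ{t₂,t₃} (a convergent power series). Define the ideal I = (y₁ − 1, (y₂)², y₂(y₃ − b₂), (y₃ − b₂)²) in the polynomial ring ℂ{t₂,t₃}[y₁,y₂,y₃]. Then {I, I} ⊆ I for the Poisson bracket with {yᵢ, tⱼ} = −δᵢⱼ, i.e., the corresponding manifold with multiplication is an F-manifold. -/
/-!
The ideal is `(y₁ − 1) + m²` with `m = (y₂, y₃ − b₂)`. The bracket is a biderivation: each
`{f, ·}` is a derivation and `{f, g} = −{g, f}`. Since it involves neither `y₁` nor `t₁`, the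
generator `y₁ − 1` brackets to zero with everything. For any ideal `m`, a derivation maps `m²` into
`m`, so `{g, ab} = a{g, b} + b{g, a} ∈ m²` for `a, b ∈ m` and `g ∈ m²`: the square of every ideal is
closed under the bracket, whatever `b₂` is. Closure of an ideal under a biderivation can be
checked on generators.
-/

noncomputable section

abbrev Rts : Type := MvPowerSeries (Fin 2) ℂ

/-- partial derivative ∂/∂tⱼ on power series in (t₂,t₃) -/
def pderivPS (j : Fin 2) (f : Rts) : Rts :=
  fun m => ((m j : ℂ) + 1) * f (m + Finsupp.single j 1)

abbrev Sy : Type := MvPolynomial (Fin 3) Rts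

/-- apply ∂/∂tⱼ to the coefficients of a polynomial in (y₁,y₂,y₃) -/
def Dt (j : Fin 2) (f : Sy) : Sy :=
  f.support.sum (fun m => MvPolynomial.monomial m (pderivPS j (MvPolynomial.coeff m f)))

/-- Poisson bracket `{f,g} = Σₖ (∂f/∂tₖ ∂g/∂yₖ − ∂f/∂yₖ ∂g/∂tₖ)` (`t₁`-derivatives vanish);
`tₖ` for `k ∈ {2,3}` corresponds to the `y`-variable of index `k`. -/
def poisson (f g : Sy) : Sy :=
  ∑ j : Fin 2,
    (Dt j f * MvPolynomial.pderiv j.succ g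
      - MvPolynomial.pderiv j.succ f * Dt j g)

section Derivation

variable {R A : Type*} [CommSemiring R] [CommSemiring A] [Algebra R A]

theorem Derivation.apply_mem_of_mem_span (D : Derivation R A A) {S : Set A} {J : Ideal A}
    (hSJ : Ideal.span S ≤ J) (hS : ∀ s ∈ S, D s ∈ J) {x : A} (hx : x ∈ Ideal.span S) :
    D x ∈ J := by
  induction hx using Submodule.span_induction with
  | mem s hs => exact hS s hs
  | zero => simp
  | add x y _ _ hx hy => simpa using J.add_mem hx hy
  | smul a x hx' hx =>
    rw [smul_eq_mul, D.leibniz]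
    exact J.add_mem (J.mul_mem_left a hx) (J.mul_mem_right _ (hSJ hx'))

theorem Derivation.apply_mem_of_mem_mul_self (D : Derivation R A A) {m : Ideal A} {x : A}
    (hx : x ∈ m * m) : D x ∈ m := by
  refine Submodule.mul_induction_on hx (fun a ha b hb => ?_) (fun x y hx hy => ?_)
  · rw [D.leibniz]
    exact m.add_mem (m.mul_mem_right _ ha) (m.mul_mem_right _ hb)
  · simpa using m.add_mem hx hy

end Derivation

section Biderivation

variable {R A : Type*} [CommSemiring R] [CommRing A] [Algebra R A]
  (B : A → Derivation R A A) (hB : ∀ f g, B f g = -B g f)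
include hB

theorem bracket_mem_span_of_mem_span {S : Set A}
    (hS : ∀ s ∈ S, ∀ t ∈ S, B s t ∈ Ideal.span S) {f g : A}
    (hf : f ∈ Ideal.span S) (hg : g ∈ Ideal.span S) : B f g ∈ Ideal.span S := by
  have hgen : ∀ s ∈ S, B s g ∈ Ideal.span S := fun s hs =>
    (B s).apply_mem_of_mem_span le_rfl (hS s hs) hg
  rw [hB, neg_mem_iff]
  exact (B g).apply_mem_of_mem_span le_rfl
    (fun s hs => by rw [hB, neg_mem_iff]; exact hgen s hs) hf

theorem bracket_mem_mul_self {m : Ideal A} {f g : A} (hf : f ∈ m * m) (hg : g ∈ m * m) :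
    B f g ∈ m * m := by
  have hmem : ∀ c ∈ m, B f c ∈ m := fun c hc => by
    rw [hB, neg_mem_iff]
    exact (B c).apply_mem_of_mem_mul_self hf
  refine Submodule.mul_induction_on hg (fun a ha b hb => ?_) (fun x y hx hy => ?_)
  · rw [(B f).leibniz, smul_eq_mul, smul_eq_mul]
    exact add_mem (Ideal.mul_mem_mul ha (hmem b hb)) (Ideal.mul_mem_mul hb (hmem a ha))
  · simpa using add_mem hx hy

end Biderivation

namespace MvPolynomial

section MapCoeffs

variable {σ A : Type*} [CommSemiring A]

def mapCoeffs (f : A → A) (p : MvPolynomial σ A) : MvPolynomial σ A :=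
  p.support.sum fun n => monomial n (f (coeff n p))

theorem coeff_mapCoeffs {f : A → A} (hf : f 0 = 0) (p : MvPolynomial σ A) (n : σ →₀ ℕ) :
    coeff n (mapCoeffs f p) = f (coeff n p) := by
  classical
  rw [mapCoeffs, coeff_sum]
  simp only [coeff_monomial]
  rw [Finset.sum_ite_eq' p.support n]
  split_ifs with h
  · rfl
  · rw [notMem_support_iff.mp h, hf]

end MapCoeffs

variable {σ R A : Type*} [CommSemiring R] [CommRing A] [Algebra R A]

def mapCoeffsDerivation (D : Derivation R A A) :
    Derivation R (MvPolynomial σ A) (MvPolynomial σ A) :=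
  Derivation.mk'
    { toFun := mapCoeffs D
      map_add' := fun p q => by ext n; simp [coeff_mapCoeffs]
      map_smul' := fun r p => by ext n; simp [coeff_mapCoeffs] }
    fun p q => by
      classical
      ext n
      rw [smul_eq_mul, smul_eq_mul, mul_comm q]
      simp only [LinearMap.coe_mk, AddHom.coe_mk, coeff_add, coeff_mul,
        coeff_mapCoeffs D.map_zero, map_sum, D.leibniz, smul_eq_mul, ← Finset.sum_add_distrib]
      exact Finset.sum_congr rfl fun x _ => by ring

theorem coe_mapCoeffsDerivation (D : Derivation R A A) :
    ⇑(mapCoeffsDerivation (σ := σ) D) = mapCoeffs D := rfl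

theorem mapCoeffsDerivation_X (D : Derivation R A A) (i : σ) :
    mapCoeffsDerivation D (X i) = 0 := by
  classical
  ext n
  rw [coe_mapCoeffsDerivation, coeff_mapCoeffs D.map_zero, coeff_X]
  split_ifs <;> simp

end MvPolynomial

section PoissonBracket

open MvPolynomial

theorem pderivPS_eq_pderiv (j : Fin 2) : pderivPS j = MvPowerSeries.pderiv ℂ j := by
  funext f
  ext n
  rw [MvPowerSeries.coeff_pderiv, mul_comm]
  rfl

theorem Dt_eq_mapCoeffsDerivation (j : Fin 2) :
    Dt j = mapCoeffsDerivation (MvPowerSeries.pderiv ℂ j) := by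
  funext f
  simp only [Dt, pderivPS_eq_pderiv]
  rfl

def poissonDerivation (f : Sy) : Derivation ℂ Sy Sy :=
  ∑ j : Fin 2, (Dt j f • (pderiv j.succ).restrictScalars ℂ -
    pderiv j.succ f • mapCoeffsDerivation (MvPowerSeries.pderiv ℂ j))

theorem poissonDerivation_apply (f g : Sy) : poissonDerivation f g = poisson f g := by
  rw [poissonDerivation, ← Derivation.coeFnAddMonoidHom_apply, map_sum, Finset.sum_apply]
  simp [poisson, Dt_eq_mapCoeffsDerivation]

theorem poisson_comm (f g : Sy) : poisson f g = -poisson g f := by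
  simp only [poisson, ← Finset.sum_neg_distrib]
  exact Finset.sum_congr rfl fun j _ => by ring

theorem poisson_X_zero_sub_one (g : Sy) : poisson (X 0 - 1) g = 0 := by
  refine Finset.sum_eq_zero fun j _ => ?_
  have hDt : Dt j (X 0 - 1) = 0 := by
    simp [Dt_eq_mapCoeffsDerivation, mapCoeffsDerivation_X]
  have hpderiv : pderiv j.succ (X 0 - 1 : Sy) = 0 := by
    simp [pderiv_X_of_ne (Fin.succ_ne_zero j).symm]
  simp [hDt, hpderiv]

end PoissonBracket

open MvPolynomial in
/-- For any (convergent) power series `b₂` in `(t₂,t₃)`, the ideal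
`I = (y₁ − 1, y₂², y₂(y₃ − b₂), (y₃ − b₂)²)` is closed under the Poisson bracket
`{yᵢ,tⱼ} = −δᵢⱼ`; i.e. the corresponding manifold with multiplication
(`∂₂² = ∂₂(∂₃ − b₂∂₁) = (∂₃ − b₂∂₁)² = 0`) is an `F`-manifold. -/
theorem poisson_closed_Qone_family (b₂ : Rts) :
    ∀ f ∈ Ideal.span {(X 0 : Sy) - 1, (X 1 : Sy) ^ 2,
        (X 1 : Sy) * (X 2 - C b₂), ((X 2 : Sy) - C b₂) ^ 2},
      ∀ g ∈ Ideal.span {(X 0 : Sy) - 1, (X 1 : Sy) ^ 2,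
        (X 1 : Sy) * (X 2 - C b₂), ((X 2 : Sy) - C b₂) ^ 2},
        poisson f g ∈ Ideal.span {(X 0 : Sy) - 1, (X 1 : Sy) ^ 2,
          (X 1 : Sy) * (X 2 - C b₂), ((X 2 : Sy) - C b₂) ^ 2} := by
  set m : Ideal Sy := Ideal.span {X 1, X 2 - C b₂}
  set S : Set Sy := {X 0 - 1, X 1 ^ 2, X 1 * (X 2 - C b₂), (X 2 - C b₂) ^ 2}
  have hm : m * m ≤ Ideal.span S := by
    rw [Ideal.span_pair_mul_span_pair, Ideal.span_le]
    rintro x (rfl | rfl | rfl | rfl) <;> apply Ideal.subset_span <;> simp [S, sq, mul_comm]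
  have hS : ∀ s ∈ S, s = X 0 - 1 ∨ s ∈ m * m := by
    have h1 : X 1 ∈ m := Ideal.subset_span (by simp)
    have h2 : X 2 - C b₂ ∈ m := Ideal.subset_span (by simp)
    rintro s (rfl | rfl | rfl | rfl)
    · exact .inl rfl
    · exact .inr (sq (X 1 : Sy) ▸ Ideal.mul_mem_mul h1 h1)
    · exact .inr (Ideal.mul_mem_mul h1 h2)
    · exact .inr (sq (X 2 - C b₂ : Sy) ▸ Ideal.mul_mem_mul h2 h2)
  have hcomm : ∀ f g, poissonDerivation f g = -poissonDerivation g f := by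
    simpa only [poissonDerivation_apply] using poisson_comm
  intro f hf g hg
  rw [← poissonDerivation_apply]
  refine bracket_mem_span_of_mem_span poissonDerivation hcomm (fun s hs t ht => ?_) hf hg
  rcases hS s hs with rfl | hs
  · simp [poissonDerivation_apply, poisson_X_zero_sub_one]
  rcases hS t ht with rfl | ht
  · simp [hcomm s, poissonDerivation_apply, poisson_X_zero_sub_one]
  exact hm (bracket_mem_mul_self poissonDerivation hcomm hs ht)

end
end

section
/- Let ξ be a root of ξ³ + 2ξt₃ + t₂ = 0 depending holomorphically on (t₂,t₃) where the discriminant is nonzero, and let f = (3/4)ξt₂ + (1/2)ξ²t₃. Then ∂f/∂t₂ = ξ and ∂f/∂t₃ = ξ². -/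
/-!
Differentiating `ξ³ + 2ξt₃ + t₂ = 0` gives `(3ξ² + 2t₃) dξ = -(dt₂ + 2ξ dt₃)`, and by the same equation
the coefficient of `dξ` in `df` is `(3/4)t₂ + ξt₃ = -(ξ/4)(3ξ² + 2t₃)`. Substituting, all terms in `dξ`
cancel and `df = ξ dt₂ + ξ² dt₃`.
-/

open Filter Topology ContinuousLinearMap

variable {𝕜 : Type*} [NontriviallyNormedField 𝕜] {ξ : 𝕜 × 𝕜 → 𝕜} {p : 𝕜 × 𝕜}

theorem cubic_implicit_fderiv_apply (hξ : DifferentiableAt 𝕜 ξ p)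
    (heq : ∀ᶠ q in 𝓝 p, ξ q ^ 3 + 2 * ξ q * q.2 + q.1 = 0) (v : 𝕜 × 𝕜) :
    (3 * ξ p ^ 2 + 2 * p.2) * fderiv 𝕜 ξ p v + 2 * ξ p * v.2 + v.1 = 0 := by
  have hD := hξ.hasFDerivAt
  have hcubic := ((hD.pow 3).add ((hD.const_mul 2).mul hasFDerivAt_snd)).add hasFDerivAt_fst
  have hzero : HasFDerivAt (fun q => ξ q ^ 3 + 2 * ξ q * q.2 + q.1) (0 : 𝕜 × 𝕜 →L[𝕜] 𝕜) p :=
    (hasFDerivAt_const 0 p).congr_of_eventuallyEq heq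
  have hv := congrArg (· v) (hcubic.unique hzero)
  simp only [Nat.add_one_sub_one, nsmul_eq_mul, Nat.cast_ofNat, add_apply, smul_apply, smul_eq_mul,
    coe_snd', coe_fst', zero_apply] at hv
  linear_combination hv

theorem hasFDerivAt_cubic_potential [CharZero 𝕜] (hξ : DifferentiableAt 𝕜 ξ p)
    (heq : ∀ᶠ q in 𝓝 p, ξ q ^ 3 + 2 * ξ q * q.2 + q.1 = 0) :
    HasFDerivAt (fun q : 𝕜 × 𝕜 => (3 / 4) * ξ q * q.1 + (1 / 2) * ξ q ^ 2 * q.2)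
      (ξ p • fst 𝕜 𝕜 𝕜 + ξ p ^ 2 • snd 𝕜 𝕜 𝕜) p := by
  have hD := hξ.hasFDerivAt
  have hf : HasFDerivAt (fun q : 𝕜 × 𝕜 => (3 / 4) * ξ q * q.1 + (1 / 2) * ξ q ^ 2 * q.2) _ p :=
    ((hD.const_mul (3 / 4 : 𝕜)).mul hasFDerivAt_fst).add
      (((hD.pow 2).const_mul (1 / 2 : 𝕜)).mul hasFDerivAt_snd)
  refine hf.congr_fderiv (ContinuousLinearMap.ext fun v => ?_)
  have hv := cubic_implicit_fderiv_apply hξ heq v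
  have hp := heq.self_of_nhds
  simp only [Nat.add_one_sub_one, pow_one, nsmul_eq_mul, Nat.cast_ofNat, add_apply, smul_apply,
    coe_fst', smul_eq_mul, coe_snd']
  linear_combination (3 / 4) * fderiv 𝕜 ξ p v * hp - (ξ p / 4) * hv

theorem A3_potential_derivatives_general
    (U : Set (ℂ × ℂ)) (hU : IsOpen U) (ξ : ℂ × ℂ → ℂ)
    (hξ : ∀ p ∈ U, DifferentiableAt ℂ ξ p)
    (heq : ∀ p ∈ U, (ξ p) ^ 3 + 2 * ξ p * p.2 + p.1 = 0) :
    ∀ p ∈ U,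
      fderiv ℂ (fun q : ℂ × ℂ => (3 / 4) * ξ q * q.1 + (1 / 2) * (ξ q) ^ 2 * q.2) p (1, 0)
        = ξ p ∧
      fderiv ℂ (fun q : ℂ × ℂ => (3 / 4) * ξ q * q.1 + (1 / 2) * (ξ q) ^ 2 * q.2) p (0, 1)
        = (ξ p) ^ 2 := by
  intro p hp
  have hf := hasFDerivAt_cubic_potential (hξ p hp) (eventually_of_mem (hU.mem_nhds hp) heq)
  rw [hf.fderiv]
  simp

/-- (`A₃` case) Let `ξ` be a holomorphic root of `ξ³ + 2ξt₃ + t₂ = 0` on an open set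
where the discriminant `27t₂² + 32t₃³` is nonzero, and let
`f = (3/4)ξt₂ + (1/2)ξ²t₃`. Then `∂f/∂t₂ = ξ` and `∂f/∂t₃ = ξ²`. -/
theorem A3_potential_derivatives
    (U : Set (ℂ × ℂ)) (hU : IsOpen U) (ξ : ℂ × ℂ → ℂ)
    (hξ : ∀ p ∈ U, DifferentiableAt ℂ ξ p)
    (heq : ∀ p ∈ U, (ξ p) ^ 3 + 2 * ξ p * p.2 + p.1 = 0)
    (hdisc : ∀ p ∈ U, 27 * p.1 ^ 2 + 32 * p.2 ^ 3 ≠ 0) :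
    ∀ p ∈ U,
      fderiv ℂ (fun q : ℂ × ℂ => (3 / 4) * ξ q * q.1 + (1 / 2) * (ξ q) ^ 2 * q.2) p (1, 0)
        = ξ p ∧
      fderiv ℂ (fun q : ℂ × ℂ => (3 / 4) * ξ q * q.1 + (1 / 2) * (ξ q) ^ 2 * q.2) p (0, 1)
        = (ξ p) ^ 2 :=
  A3_potential_derivatives_general U hU ξ hξ heq
end

section
/- Let ξ(t₂,t₃) be a holomorphic function satisfying ξ³ − (2ξt₃ + t₂)² = 0 on an open set where t₂(32t₃³+27t₂) ≠ 0, and let f = (3/5)ξt₂ + (1/5)ξ²t₃. Then ∂f/∂t₂ = ξ and ∂f/∂t₃ = ξ². -/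
/-- (`H₃` case) Let `ξ` be a holomorphic function satisfying `ξ³ − (2ξt₃ + t₂)² = 0` on an
open set where `t₂(32t₃³ + 27t₂)` is nonzero, and let `f = (3/5)ξt₂ + (1/5)ξ²t₃`.
Then `∂f/∂t₂ = ξ` and `∂f/∂t₃ = ξ²`. -/
theorem H3_potential_derivatives
    (U : Set (ℂ × ℂ)) (hU : IsOpen U) (ξ : ℂ × ℂ → ℂ)
    (hξ : ∀ p ∈ U, DifferentiableAt ℂ ξ p)
    (heq : ∀ p ∈ U, (ξ p) ^ 3 - (2 * ξ p * p.2 + p.1) ^ 2 = 0)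
    (hdisc : ∀ p ∈ U, p.1 * (32 * p.2 ^ 3 + 27 * p.1) ≠ 0) :
    ∀ p ∈ U,
      fderiv ℂ (fun q : ℂ × ℂ => (3 / 5) * ξ q * q.1 + (1 / 5) * (ξ q) ^ 2 * q.2) p (1, 0)
        = ξ p ∧
      fderiv ℂ (fun q : ℂ × ℂ => (3 / 5) * ξ q * q.1 + (1 / 5) * (ξ q) ^ 2 * q.2) p (0, 1)
        = (ξ p) ^ 2 := by
  intro p hp
  set A := fderiv ℂ ξ p with hA
  have hd : HasFDerivAt ξ A p := (hξ p hp).hasFDerivAt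
  have hfst : HasFDerivAt (fun q : ℂ × ℂ => q.1) (ContinuousLinearMap.fst ℂ ℂ ℂ) p :=
    hasFDerivAt_fst
  have hsnd : HasFDerivAt (fun q : ℂ × ℂ => q.2) (ContinuousLinearMap.snd ℂ ℂ ℂ) p :=
    hasFDerivAt_snd
  -- inner function η = 2ξt₃ + t₂
  have hinner : HasFDerivAt (fun q : ℂ × ℂ => 2 * ξ q * q.2 + q.1)
      (((2 * ξ p) • ContinuousLinearMap.snd ℂ ℂ ℂ + p.2 • ((2:ℂ) • A)) +
        ContinuousLinearMap.fst ℂ ℂ ℂ) p :=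
    (((hd.const_mul 2).mul hsnd).add hfst)
  set B := (((2 * ξ p) • ContinuousLinearMap.snd ℂ ℂ ℂ + p.2 • ((2:ℂ) • A)) +
        ContinuousLinearMap.fst ℂ ℂ ℂ) with hB
  have hcube : HasFDerivAt (fun q : ℂ × ℂ => ξ q * ξ q * ξ q)
      ((ξ p * ξ p) • A + ξ p • (ξ p • A + ξ p • A)) p := (hd.mul hd).mul hd
  have hsq : HasFDerivAt (fun q : ℂ × ℂ => (2 * ξ q * q.2 + q.1) * (2 * ξ q * q.2 + q.1))
      ((2 * ξ p * p.2 + p.1) • B + (2 * ξ p * p.2 + p.1) • B) p := hinner.mul hinner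
  have hg : HasFDerivAt (fun q : ℂ × ℂ => ξ q * ξ q * ξ q -
      (2 * ξ q * q.2 + q.1) * (2 * ξ q * q.2 + q.1))
      (((ξ p * ξ p) • A + ξ p • (ξ p • A + ξ p • A)) -
        ((2 * ξ p * p.2 + p.1) • B + (2 * ξ p * p.2 + p.1) • B)) p := hcube.sub hsq
  have hzero : HasFDerivAt (fun q : ℂ × ℂ => ξ q * ξ q * ξ q -
      (2 * ξ q * q.2 + q.1) * (2 * ξ q * q.2 + q.1)) (0 : (ℂ × ℂ) →L[ℂ] ℂ) p := by
    refine (hasFDerivAt_const (0:ℂ) p).congr_of_eventuallyEq ?_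
    filter_upwards [hU.mem_nhds hp] with q hq
    have := heq q hq
    linear_combination this
  have hGzero := hzero.unique hg
  -- key pointwise relation
  have key : ∀ v : ℂ × ℂ,
      (ξ p * ξ p) * A v + ξ p * (ξ p * A v + ξ p * A v) -
        ((2 * ξ p * p.2 + p.1) * B v + (2 * ξ p * p.2 + p.1) * B v) = 0 := by
    intro v
    have := congrFun (congrArg (fun (L : (ℂ × ℂ) →L[ℂ] ℂ) => (L : ℂ × ℂ → ℂ)) hGzero) v
    simp [ContinuousLinearMap.sub_apply, ContinuousLinearMap.add_apply,
      ContinuousLinearMap.smul_apply, smul_eq_mul] at this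
    linear_combination -this
  have hBv : ∀ v : ℂ × ℂ, B v = 2 * ξ p * v.2 + p.2 * (2 * A v) + v.1 := by
    intro v
    simp [hB, ContinuousLinearMap.add_apply, ContinuousLinearMap.smul_apply, smul_eq_mul]
  have hη : 2 * ξ p * p.2 + p.1 ≠ 0 := by
    intro h0
    have h3 := heq p hp
    rw [h0] at h3
    have hξ0 : ξ p = 0 := by
      have : ξ p ^ 3 = 0 := by linear_combination h3
      exact pow_eq_zero_iff (by norm_num) |>.mp this
    have ht2 : p.1 = 0 := by rw [hξ0] at h0; linear_combination h0
    exact hdisc p hp (by rw [ht2]; ring)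
  have h3 := heq p hp
  -- linear relation: (2ξt₃ + 3t₂) * A v = 2ξ v₁ + 4ξ² v₂
  have hlin : ∀ v : ℂ × ℂ,
      (2 * ξ p * p.2 + 3 * p.1) * A v = 2 * ξ p * v.1 + 4 * ξ p ^ 2 * v.2 := by
    intro v
    have c1 := key v
    rw [hBv v] at c1
    refine mul_left_cancel₀ hη ?_
    linear_combination ξ p * c1 - 3 * A v * h3
  -- derivative of f
  have hfun : (fun q : ℂ × ℂ => (3 / 5) * ξ q * q.1 + (1 / 5) * (ξ q) ^ 2 * q.2) =
      (fun q : ℂ × ℂ => (3 / 5) * ξ q * q.1 + (1 / 5) * (ξ q * ξ q) * q.2) := by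
    funext q; ring
  have hf : HasFDerivAt (fun q : ℂ × ℂ => (3 / 5) * ξ q * q.1 + (1 / 5) * (ξ q * ξ q) * q.2)
      ((((3/5 : ℂ) * ξ p) • ContinuousLinearMap.fst ℂ ℂ ℂ + p.1 • ((3/5 : ℂ) • A)) +
        (((1/5 : ℂ) * (ξ p * ξ p)) • ContinuousLinearMap.snd ℂ ℂ ℂ +
          p.2 • ((1/5 : ℂ) • (ξ p • A + ξ p • A)))) p :=
    ((hd.const_mul (3/5)).mul hfst).add (((hd.mul hd).const_mul (1/5)).mul hsnd)
  rw [hfun, hf.fderiv]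
  constructor
  · have := hlin (1, 0)
    simp only [ContinuousLinearMap.add_apply, ContinuousLinearMap.smul_apply,
      ContinuousLinearMap.coe_fst', ContinuousLinearMap.coe_snd', smul_eq_mul]
    simp at this ⊢
    linear_combination (1/5 : ℂ) * this
  · have := hlin (0, 1)
    simp only [ContinuousLinearMap.add_apply, ContinuousLinearMap.smul_apply,
      ContinuousLinearMap.coe_fst', ContinuousLinearMap.coe_snd', smul_eq_mul]
    simp at this ⊢
    linear_combination (1/5 : ℂ) * this
end

section
/- Let M = ℂ³ with coordinates (t₁,t₂,t₃) and fix p ∈ ℤ with p ≥ 2. The multiplication on TM given by unit e = ∂₁ and ∂₂∘∂₂ = p·t₂^{p−1}·∂₂, ∂₂∘∂₃ = 0, ∂₃∘∂₃ = 0 is associative, and the vector field E = (t₁+c₁)∂₁ + (1/p)t₂∂₂ + ε₃(t₃)∂₃ satisfies Lie_E(∘) = ∘ for any c₁ ∈ ℂ and ε₃ ∈ ℂ{t₃}; concretely, for all i,j ∈ {1,2,3}: [E, ∂ᵢ∘∂ⱼ] − [E,∂ᵢ]∘∂ⱼ − [E,∂ⱼ]∘∂ᵢ = ∂ᵢ∘∂ⱼ.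 -/
noncomputable section

/-- Formal (power series) functions of the coordinates `(t₁,t₂,t₃)` on `M = ℂ³`. -/
abbrev Rt : Type := MvPowerSeries (Fin 3) ℂ

/-- Partial derivative `∂/∂tⱼ` on `Rt`. -/
def pd (j : Fin 3) (f : Rt) : Rt :=
  fun m => ((m j : ℂ) + 1) * f (m + Finsupp.single j 1)

/-- Vector fields `X₁∂₁ + X₂∂₂ + X₃∂₃` are triples of functions. -/
abbrev VF : Type := Rt × Rt × Rt

/-- The multiplication `∘` on vector fields with unit `e = ∂₁`,
`∂₂∘∂₂ = p·t₂^(p−1)·∂₂`, `∂₂∘∂₃ = 0`, `∂₃∘∂₃ = 0`. -/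
def pMul (p : ℕ) (x y : VF) : VF :=
  (x.1 * y.1,
   x.1 * y.2.1 + x.2.1 * y.1 + (p : Rt) * MvPowerSeries.X 1 ^ (p - 1) * (x.2.1 * y.2.1),
   x.1 * y.2.2 + x.2.2 * y.1)

/-- The Lie bracket of vector fields: `[X,Y]ᵢ = Σⱼ (Xⱼ∂ⱼYᵢ − Yⱼ∂ⱼXᵢ)`. -/
def lieVF (x y : VF) : VF :=
  (x.1 * pd 0 y.1 + x.2.1 * pd 1 y.1 + x.2.2 * pd 2 y.1
     - (y.1 * pd 0 x.1 + y.2.1 * pd 1 x.1 + y.2.2 * pd 2 x.1),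
   x.1 * pd 0 y.2.1 + x.2.1 * pd 1 y.2.1 + x.2.2 * pd 2 y.2.1
     - (y.1 * pd 0 x.2.1 + y.2.1 * pd 1 x.2.1 + y.2.2 * pd 2 x.2.1),
   x.1 * pd 0 y.2.2 + x.2.1 * pd 1 y.2.2 + x.2.2 * pd 2 y.2.2
     - (y.1 * pd 0 x.2.2 + y.2.1 * pd 1 x.2.2 + y.2.2 * pd 2 x.2.2))

/-- A power series in the single variable `t₃`, viewed as an element of `Rt`. -/
def ofT3 (g : PowerSeries ℂ) : Rt :=
  fun m => if m 0 = 0 ∧ m 1 = 0 then PowerSeries.coeff (m 2) g else 0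

/-- The coordinate vector fields `∂₁, ∂₂, ∂₃`. -/
def Dv : Fin 3 → VF := ![(1, 0, 0), (0, 1, 0), (0, 0, 1)]

/-! Associativity is a polynomial identity in the components. For the Euler condition, `pd` is
Mathlib's formal partial derivative `MvPowerSeries.pderiv`, so every bracket is computed by the
derivation rules, which settle every case but `∂₂∘∂₂` outright. There the coefficient
`f = p t₂^(p-1)` has weight `(p-1)/p` under `E = … + (1/p) t₂ ∂₂ + …` (Euler's identity
`t ∂ₜ tⁿ = n tⁿ`), and `[E, f∂₂] - 2[E,∂₂]∘∂₂ = (E f - f/p + 2f/p) ∂₂ = f ∂₂`. -/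

open MvPowerSeries

theorem pMul_assoc (p : ℕ) (x y z : VF) : pMul p (pMul p x y) z = pMul p x (pMul p y z) := by
  simp only [pMul, Prod.mk.injEq]
  exact ⟨by ring, by ring, by ring⟩

theorem pd_eq_pderiv (j : Fin 3) (f : Rt) : pd j f = pderiv ℂ j f := by
  ext m
  rw [coeff_pderiv, mul_comm]
  rfl

theorem pderiv_ofT3_of_ne {j : Fin 3} (hj : j ≠ 2) (g : PowerSeries ℂ) :
    pderiv ℂ j (ofT3 g) = 0 := by
  ext m
  have hm : ¬((m + Finsupp.single j 1 : Fin 3 →₀ ℕ) 0 = 0 ∧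
      (m + Finsupp.single j 1 : Fin 3 →₀ ℕ) 1 = 0) := by
    fin_cases j <;> simp_all
  rw [coeff_pderiv, map_zero]
  show ofT3 g _ * _ = 0
  rw [ofT3, if_neg hm, zero_mul]

theorem mul_natCast_mul_pow_sub_one {R : Type*} [CommSemiring R] (a : R) (n : ℕ) :
    a * (n * a ^ (n - 1)) = n * a ^ n := by
  cases n with
  | zero => simp
  | succ n => rw [Nat.add_sub_cancel, pow_succ]; ring

-- `c` plays `1/p` (`p c p = p` also holds at `p = 0`, where `0⁻¹ = 0`) and `a` plays `t₂`: this is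
-- `(c a ∂ₐ) f + c f = f` for `f = p a^(p-1)`, in the form `simp` leaves it.
theorem euler_weight_natCast_mul_pow_pred {A : Type*} [CommRing A] (a c : A) (p : ℕ)
    (hc : p * c * p = p) :
    c * a * (p * ((p - 1 : ℕ) * a ^ (p - 1 - 1))) + p * a ^ (p - 1) * c = p * a ^ (p - 1) := by
  cases p with
  | zero => simp
  | succ k =>
    simp only [Nat.add_sub_cancel]
    push_cast at hc ⊢
    linear_combination (c * (k + 1)) * mul_natCast_mul_pow_sub_one a k + a ^ k * hc

theorem pMul_assoc_and_euler_general (p : ℕ) (c₁ : ℂ) (ε₃ : PowerSeries ℂ) :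
    (∀ x y z : VF, pMul p (pMul p x y) z = pMul p x (pMul p y z)) ∧
    (∀ i j : Fin 3,
      lieVF (MvPowerSeries.X 0 + MvPowerSeries.C c₁,
             MvPowerSeries.C ((p : ℂ)⁻¹) * MvPowerSeries.X 1, ofT3 ε₃)
          (pMul p (Dv i) (Dv j))
        - pMul p (lieVF (MvPowerSeries.X 0 + MvPowerSeries.C c₁,
             MvPowerSeries.C ((p : ℂ)⁻¹) * MvPowerSeries.X 1, ofT3 ε₃) (Dv i))
            (Dv j)
        - pMul p (lieVF (MvPowerSeries.X 0 + MvPowerSeries.C c₁,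
             MvPowerSeries.C ((p : ℂ)⁻¹) * MvPowerSeries.X 1, ofT3 ε₃) (Dv j))
            (Dv i)
      = pMul p (Dv i) (Dv j)) := by
  refine ⟨pMul_assoc p, fun i j => ?_⟩
  fin_cases i <;> fin_cases j <;>
    simp [Dv, pMul, lieVF, pd_eq_pderiv, pderiv_ofT3_of_ne, Prod.ext_iff]
  exact euler_weight_natCast_mul_pow_pred _ _ p
    (by rw [← map_natCast C, ← map_mul, ← map_mul, mul_inv_mul_cancel])

/-- On `M = ℂ³` with `p ≥ 2`, the multiplication with unit `e = ∂₁` and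
`∂₂∘∂₂ = p·t₂^(p−1)·∂₂`, `∂₂∘∂₃ = 0`, `∂₃∘∂₃ = 0` is associative, and for any `c₁ ∈ ℂ`
and any `ε₃ ∈ ℂ{t₃}` the vector field `E = (t₁+c₁)∂₁ + (1/p)t₂∂₂ + ε₃(t₃)∂₃`
satisfies `Lie_E(∘) = ∘`, i.e.
`[E, ∂ᵢ∘∂ⱼ] − [E,∂ᵢ]∘∂ⱼ − [E,∂ⱼ]∘∂ᵢ = ∂ᵢ∘∂ⱼ` for all `i,j`. -/
theorem pMul_assoc_and_euler (p : ℕ) (hp : 2 ≤ p) (c₁ : ℂ) (ε₃ : PowerSeries ℂ) :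
    (∀ x y z : VF, pMul p (pMul p x y) z = pMul p x (pMul p y z)) ∧
    (∀ i j : Fin 3,
      lieVF (MvPowerSeries.X 0 + MvPowerSeries.C c₁,
             MvPowerSeries.C ((p : ℂ)⁻¹) * MvPowerSeries.X 1, ofT3 ε₃)
          (pMul p (Dv i) (Dv j))
        - pMul p (lieVF (MvPowerSeries.X 0 + MvPowerSeries.C c₁,
             MvPowerSeries.C ((p : ℂ)⁻¹) * MvPowerSeries.X 1, ofT3 ε₃) (Dv i))
            (Dv j)
        - pMul p (lieVF (MvPowerSeries.X 0 + MvPowerSeries.C c₁,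
             MvPowerSeries.C ((p : ℂ)⁻¹) * MvPowerSeries.X 1, ofT3 ε₃) (Dv j))
            (Dv i)
      = pMul p (Dv i) (Dv j)) :=
  pMul_assoc_and_euler_general p c₁ ε₃

end
end
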